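/- In H_1(Σ_n^d; ℤ), the classes [a_i^k] for i = 1,…,d satisfy the relation ∑_{i=1}^d [a_i^k] = 0 for each k, and the classes [a_i^k] for k = 1,…,n-1 and i = 1,…,d-1 form a ℤ-basis of H_1(Σ_n^d; ℤ) ≅ ℤ^{(n-1)(d-1)}. -/

import Mathlib

/-!
The graph is the path `x_0 — x_1 — ⋯ — x_n` with every edge replaced by `d` parallel edges.
Its boundary map is "add up each bundle of parallel edges" followed by the boundary map of the
path, which is injective because a path has no cycles; so the cycles are the chains whose
coefficients sum to zero on every bundle. On a bundle of `d` edges, the map sending edge `i` of a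
path with `d - 1` edges to `γ_i - γ_{i+1}` is again (minus) a path boundary map, hence injective,
and its image is all of the sum-zero vectors because partial sums invert it.
-/

open Finset

section PathBoundary
variable {M : Type*} [AddCommGroup M] {m : ℕ}

-- Edge `i` of the path `0 — 1 — ⋯ — m` runs from vertex `i` to vertex `i + 1`.
def pathBoundary : (Fin m → M) →+ (Fin (m + 1) → M) :=
  AddMonoidHom.mk' (fun c => Fin.cons 0 c - Fin.snoc c 0) fun c c' => by
    have hcons : (Fin.cons 0 (c + c') : Fin (m + 1) → M) = Fin.cons 0 c + Fin.cons 0 c' := by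
      ext j; cases j using Fin.cases <;> simp
    have hsnoc : (Fin.snoc (c + c') 0 : Fin (m + 1) → M) = Fin.snoc c 0 + Fin.snoc c' 0 := by
      ext j; cases j using Fin.lastCases <;> simp
    rw [hcons, hsnoc]
    abel

lemma pathBoundary_apply (c : Fin m → M) : pathBoundary c = Fin.cons 0 c - Fin.snoc c 0 := rfl

lemma pathBoundary_single (i : Fin m) (x : M) :
    pathBoundary (Pi.single i x) = Pi.single i.succ x - Pi.single i.castSucc x := by
  have hcons : (Fin.cons 0 (Pi.single i x) : Fin (m + 1) → M) = Pi.single i.succ x := by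
    ext j; cases j using Fin.cases <;> simp [Pi.single_apply]
  have hsnoc : (Fin.snoc (Pi.single i x) 0 : Fin (m + 1) → M) = Pi.single i.castSucc x := by
    ext j; cases j using Fin.lastCases <;> simp [Pi.single_apply]
  rw [pathBoundary_apply, hcons, hsnoc]

lemma sum_pathBoundary (c : Fin m → M) : ∑ j, pathBoundary c j = 0 := by
  simp [pathBoundary_apply]

lemma pathBoundary_injective : Function.Injective (pathBoundary : (Fin m → M) →+ _) := by
  refine (injective_iff_map_eq_zero _).2 fun c hc => ?_
  set s : Fin (m + 1) → M := Fin.snoc c 0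
  have hcons : Fin.cons 0 c = s := sub_eq_zero.1 hc
  have hs : ∀ j, s j = 0 := fun j => by
    induction j using Fin.induction with
    | zero => rw [← hcons, Fin.cons_zero]
    | succ i ih => rwa [← hcons, Fin.cons_succ, ← Fin.snoc_castSucc (α := fun _ => M) 0 c i]
  funext i
  simpa [s] using hs i.castSucc

lemma Fin.partialSum_last (g : Fin m → M) : Fin.partialSum g (Fin.last m) = ∑ j, g j := by
  rw [Fin.partialSum, Fin.val_last, List.take_of_length_le (by simp), List.sum_ofFn]

lemma exists_pathBoundary_eq {g : Fin (m + 1) → M} (hg : ∑ j, g j = 0) :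
    ∃ c, pathBoundary c = g := by
  set s := Fin.partialSum g
  have hcons :
      (Fin.cons 0 fun i => s i.castSucc.succ : Fin (m + 1) → M) = fun j => s j.castSucc := by
    ext j; cases j using Fin.cases <;> simp [s]
  have hsnoc :
      (Fin.snoc (fun i => s i.castSucc.succ) 0 : Fin (m + 1) → M) = fun j => s j.succ := by
    ext j; cases j using Fin.lastCases <;> simp [s, Fin.partialSum_last, hg]
  refine ⟨-fun i => s i.castSucc.succ, ?_⟩
  ext j
  rw [map_neg, pathBoundary_apply, hcons, hsnoc]
  simp [s, Fin.partialSum_succ]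

end PathBoundary

section ParallelPaths
variable {R : Type*} [Ring R] {ι : Type*} {m : ℕ}

-- The cycle `a_i^k = γ_i^k (γ_{i+1}^k)⁻¹` for `i < m`, in a bundle of `m + 1` parallel edges.
noncomputable def bigonCycle (p : ι × Fin m) : ι × Fin (m + 1) →₀ R :=
  Finsupp.single (p.1, p.2.castSucc) 1 - Finsupp.single (p.1, p.2.succ) 1

lemma linearCombination_bigonCycle_row (c : ι × Fin m →₀ R) (k : ι) :
    (fun j => Finsupp.linearCombination R bigonCycle c (k, j)) =
      -pathBoundary fun i => c (k, i) := by
  classical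
  induction c using Finsupp.induction_linear with
  | zero => ext; simp [← Pi.zero_def]
  | add c c' hc hc' => simp [← Pi.add_def, hc, hc', add_comm]
  | single p r =>
    obtain ⟨k', i⟩ := p
    by_cases hk : k' = k
    · subst hk
      have hrow : (fun i' => Finsupp.single (k', i) r (k', i')) = Pi.single i r := by
        ext i'; simp [Finsupp.single_apply, Pi.single_apply, eq_comm]
      ext j
      rw [hrow, pathBoundary_single]
      simp [bigonCycle, Finsupp.single_apply, Pi.single_apply, mul_sub, eq_comm]
    · ext j
      simp [bigonCycle, hk, ← Pi.zero_def]

lemma linearIndependent_bigonCycle :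
    LinearIndependent R (bigonCycle (R := R) (ι := ι) (m := m)) := by
  rw [linearIndependent_iff]
  intro c hc
  ext ⟨k, i⟩
  have hrow : pathBoundary (fun i => c (k, i)) = 0 := by
    simpa [hc, ← Pi.zero_def, eq_comm] using linearCombination_bigonCycle_row c k
  exact congr_fun ((map_eq_zero_iff _ pathBoundary_injective).1 hrow) i

lemma mem_span_bigonCycle_iff [Finite ι] {f : ι × Fin (m + 1) →₀ R} :
    f ∈ Submodule.span R (Set.range bigonCycle) ↔ ∀ k, ∑ j, f (k, j) = 0 := by
  rw [← Finsupp.range_linearCombination, LinearMap.mem_range]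
  constructor
  · rintro ⟨c, rfl⟩ k
    simpa [sum_pathBoundary] using
      congr_arg (fun g => ∑ j, g j) (linearCombination_bigonCycle_row c k)
  · intro hf
    choose c hc using fun k => exists_pathBoundary_eq (g := fun j => -f (k, j)) (by simp [hf k])
    set c' : ι × Fin m →₀ R := Finsupp.equivFunOnFinite.symm fun p => c p.1 p.2
    refine ⟨c', ?_⟩
    ext ⟨k, j⟩
    simpa [c', hc] using congr_fun (linearCombination_bigonCycle_row c' k) j

lemma boundary_eq_pathBoundary {n : ℕ} {κ : Type*} [Fintype κ]
    (bdry : (Fin n × κ →₀ R) →ₗ[R] (Fin (n + 1) →₀ R))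
    (hbdry : ∀ e : Fin n × κ,
      bdry (Finsupp.single e 1) = Finsupp.single e.1.succ 1 - Finsupp.single e.1.castSucc 1)
    (f : Fin n × κ →₀ R) : ⇑(bdry f) = pathBoundary fun k => ∑ i, f (k, i) := by
  classical
  induction f using Finsupp.induction_linear with
  | zero => simp [← Pi.zero_def]
  | add f f' hf hf' => simp [hf, hf', sum_add_distrib, ← Pi.add_def]
  | single e r =>
    have hrow : (fun k => ∑ i, Finsupp.single e r (k, i)) = Pi.single e.1 r := by
      ext k; simp [Finsupp.single_apply, Pi.single_apply, Prod.ext_iff, eq_comm, ite_and]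
    rw [hrow, pathBoundary_single, ← Finsupp.smul_single_one, map_smul, hbdry]
    ext j
    simp [Finsupp.single_apply, Pi.single_apply, eq_comm, mul_sub]

lemma mem_ker_iff_forall_sum_eq_zero {n : ℕ} {κ : Type*} [Fintype κ]
    {bdry : (Fin n × κ →₀ R) →ₗ[R] (Fin (n + 1) →₀ R)}
    (hbdry : ∀ e : Fin n × κ,
      bdry (Finsupp.single e 1) = Finsupp.single e.1.succ 1 - Finsupp.single e.1.castSucc 1)
    {f : Fin n × κ →₀ R} : f ∈ LinearMap.ker bdry ↔ ∀ k, ∑ i, f (k, i) = 0 := by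
  rw [LinearMap.mem_ker, ← DFunLike.coe_fn_eq, boundary_eq_pathBoundary bdry hbdry,
    Finsupp.coe_zero, map_eq_zero_iff _ pathBoundary_injective, funext_iff]
  rfl

end ParallelPaths

/-- `H_1(Σ_n^d; ℤ)` via the graph model: the graph has vertices `Fin (n+1)` and,
for each `k : Fin n`, `d` parallel edges `γ_i^k` from vertex `k` to vertex `k+1`.
With boundary map `bdry(γ_i^k) = x_{k+1} - x_k` and cycles
`a_i^k = γ_i^k - γ_{i+1}^k` (index `i+1` mod `d`), each `a_i^k` is a cycle,
`∑_{i=1}^d a_i^k = 0`, and the `a_i^k` for `i = 1, …, d-1` form a ℤ-basis of the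
cycle module `ker bdry ≅ H_1(Σ_n^d; ℤ) ≅ ℤ^{n(d-1)}`. -/
theorem stmt7 (n d : ℕ) [NeZero d]
    (bdry : ((Fin n × Fin d) →₀ ℤ) →ₗ[ℤ] (Fin (n + 1) →₀ ℤ))
    (hbdry : ∀ e : Fin n × Fin d,
      bdry (Finsupp.single e 1) = Finsupp.single e.1.succ 1 - Finsupp.single e.1.castSucc 1)
    (a : Fin n → Fin d → ((Fin n × Fin d) →₀ ℤ))
    (ha : ∀ k i, a k i = Finsupp.single (k, i) 1 - Finsupp.single (k, i + 1) 1) :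
    (∀ k i, a k i ∈ LinearMap.ker bdry) ∧
    (∀ k, ∑ i : Fin d, a k i = 0) ∧
    ∃ b : Module.Basis (Fin n × Fin (d - 1)) ℤ (LinearMap.ker bdry),
      ∀ (k : Fin n) (i : Fin (d - 1)),
        (b (k, i) : (Fin n × Fin d) →₀ ℤ) = a k (Fin.castLE (Nat.sub_le d 1) i) := by
  refine ⟨fun k i => ?_, fun k => ?_, ?_⟩
  · rw [LinearMap.mem_ker, ha, map_sub, hbdry, hbdry, sub_self]
  · simp only [ha, sum_sub_distrib, sub_eq_zero]
    exact (Equiv.sum_comp (Equiv.addRight 1) fun i => Finsupp.single (k, i) 1).symm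
  · obtain ⟨m, rfl⟩ : ∃ m, d = m + 1 := Nat.exists_eq_succ_of_ne_zero (NeZero.ne d)
    have hspan : Submodule.span ℤ (Set.range bigonCycle) = LinearMap.ker bdry :=
      Submodule.ext fun f =>
        mem_span_bigonCycle_iff.trans (mem_ker_iff_forall_sum_eq_zero hbdry).symm
    refine ⟨(Module.Basis.span linearIndependent_bigonCycle).map (LinearEquiv.ofEq _ _ hspan),
      fun k i => ?_⟩
    have hcast : Fin.castLE (Nat.sub_le (m + 1) 1) i = i.castSucc := rfl
    simp [Module.Basis.span_apply, bigonCycle, ha, hcast, Fin.coeSucc_eq_succ]
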